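/- Let σ₁ < σ₂ be real numbers, let q : ℝ → ℝ, and let ψ : ℝ → ℝ be three times differentiable on (σ₁,σ₂) with ψ'(t) > 0 for all t ∈ (σ₁,σ₂). If both u(t) = cos(ψ(t))/√(ψ'(t)) and v(t) = sin(ψ(t))/√(ψ'(t)) satisfy y''(t) + q(t)·y(t) = 0 on (σ₁,σ₂), then ψ' satisfies Kummer's equation relative to q on (σ₁,σ₂), i.e. q(t) − (ψ'(t))² − (1/2)·ψ'''(t)/ψ'(t) + (3/4)·(ψ''(t)/ψ'(t))² = 0 for all t ∈ (σ₁,σ₂). -/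

import Mathlib

/-!
Write `r = (ψ')^{-1/2}`, so that `u = r cos ψ` and `v = r sin ψ`. Expanding the second
derivatives, `cos ψ · u'' + sin ψ · v'' = r'' - r ψ'²` (the cross terms cancel), so the two
equations combine to `r'' + (q - ψ'²) r = 0`. Since `r' = -½ ψ'' r³`, one finds
`r''/r = ¾ (ψ''/ψ')² - ½ ψ'''/ψ'`, and dividing by `r > 0` gives Kummer's equation.
-/

open Real Set Filter Topology

section Phase

variable {r φ : ℝ → ℝ} {t : ℝ}

theorem deriv_deriv_mul_cos (hr : ∀ᶠ s in 𝓝 t, DifferentiableAt ℝ r s)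
    (hφ : ∀ᶠ s in 𝓝 t, DifferentiableAt ℝ φ s) (hr' : DifferentiableAt ℝ (deriv r) t)
    (hφ' : DifferentiableAt ℝ (deriv φ) t) :
    deriv (deriv fun s => r s * cos (φ s)) t =
      (deriv (deriv r) t - r t * deriv φ t ^ 2) * cos (φ t)
        - (2 * deriv r t * deriv φ t + r t * deriv (deriv φ) t) * sin (φ t) := by
  have hfirst : deriv (fun s => r s * cos (φ s)) =ᶠ[𝓝 t]
      fun s => deriv r s * cos (φ s) - r s * sin (φ s) * deriv φ s := by
    filter_upwards [hr, hφ] with s hrs hφs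
    rw [(hrs.hasDerivAt.fun_mul hφs.hasDerivAt.cos).deriv]
    ring
  have hφt := hφ.self_of_nhds.hasDerivAt
  rw [hfirst.deriv_eq, ((hr'.hasDerivAt.fun_mul hφt.cos).fun_sub
    ((hr.self_of_nhds.hasDerivAt.fun_mul hφt.sin).fun_mul hφ'.hasDerivAt)).deriv]
  ring

theorem deriv_deriv_mul_sin (hr : ∀ᶠ s in 𝓝 t, DifferentiableAt ℝ r s)
    (hφ : ∀ᶠ s in 𝓝 t, DifferentiableAt ℝ φ s) (hr' : DifferentiableAt ℝ (deriv r) t)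
    (hφ' : DifferentiableAt ℝ (deriv φ) t) :
    deriv (deriv fun s => r s * sin (φ s)) t =
      (deriv (deriv r) t - r t * deriv φ t ^ 2) * sin (φ t)
        + (2 * deriv r t * deriv φ t + r t * deriv (deriv φ) t) * cos (φ t) := by
  have hfirst : deriv (fun s => r s * sin (φ s)) =ᶠ[𝓝 t]
      fun s => deriv r s * sin (φ s) + r s * cos (φ s) * deriv φ s := by
    filter_upwards [hr, hφ] with s hrs hφs
    rw [(hrs.hasDerivAt.fun_mul hφs.hasDerivAt.sin).deriv]
    ring
  have hφt := hφ.self_of_nhds.hasDerivAt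
  rw [hfirst.deriv_eq, ((hr'.hasDerivAt.fun_mul hφt.sin).fun_add
    ((hr.self_of_nhds.hasDerivAt.fun_mul hφt.cos).fun_mul hφ'.hasDerivAt)).deriv]
  ring

theorem cos_mul_deriv_deriv_mul_cos_add_sin_mul_deriv_deriv_mul_sin
    (hr : ∀ᶠ s in 𝓝 t, DifferentiableAt ℝ r s) (hφ : ∀ᶠ s in 𝓝 t, DifferentiableAt ℝ φ s)
    (hr' : DifferentiableAt ℝ (deriv r) t) (hφ' : DifferentiableAt ℝ (deriv φ) t) :
    cos (φ t) * deriv (deriv fun s => r s * cos (φ s)) t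
        + sin (φ t) * deriv (deriv fun s => r s * sin (φ s)) t =
      deriv (deriv r) t - r t * deriv φ t ^ 2 := by
  rw [deriv_deriv_mul_cos hr hφ hr' hφ', deriv_deriv_mul_sin hr hφ hr' hφ']
  linear_combination (deriv (deriv r) t - r t * deriv φ t ^ 2) * sin_sq_add_cos_sq (φ t)

end Phase

section Amplitude

variable {p : ℝ → ℝ} {p' t : ℝ}

theorem HasDerivAt.inv_sqrt (hp : HasDerivAt p p' t) (hpos : 0 < p t) :
    HasDerivAt (fun s => (√(p s))⁻¹) (-(1 / 2) * p' * (√(p t))⁻¹ ^ 3) t := by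
  refine ((hp.sqrt hpos.ne').fun_inv (sqrt_pos.2 hpos).ne').congr_deriv ?_
  field_simp

theorem hasDerivAt_deriv_inv_sqrt (hp : ∀ᶠ s in 𝓝 t, DifferentiableAt ℝ p s ∧ 0 < p s)
    (hp' : DifferentiableAt ℝ (deriv p) t) :
    HasDerivAt (deriv fun s => (√(p s))⁻¹)
      ((√(p t))⁻¹ * (3 / 4 * (deriv p t / p t) ^ 2 - 1 / 2 * (deriv (deriv p) t / p t))) t := by
  have hfirst : deriv (fun s => (√(p s))⁻¹) =ᶠ[𝓝 t]
      fun s => -(1 / 2) * deriv p s * (√(p s))⁻¹ ^ 3 := by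
    filter_upwards [hp] with s ⟨hdiff, hpos⟩
    exact (hdiff.hasDerivAt.inv_sqrt hpos).deriv
  obtain ⟨hdiff, hpos⟩ := hp.self_of_nhds
  refine (((hp'.hasDerivAt.const_mul (-(1 / 2))).fun_mul
    ((hdiff.hasDerivAt.inv_sqrt hpos).fun_pow 3)).congr_of_eventuallyEq hfirst).congr_deriv ?_
  have hsq : (√(p t))⁻¹ ^ 2 = (p t)⁻¹ := by rw [inv_pow, sq_sqrt hpos.le]
  simp only [div_eq_mul_inv, ← hsq]
  ring

end Amplitude

theorem phase_pair_solutions_imply_kummer (σ₁ σ₂ : ℝ) (q ψ : ℝ → ℝ)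
    (hdiff : ∀ t ∈ Ioo σ₁ σ₂, DifferentiableAt ℝ ψ t ∧
      DifferentiableAt ℝ (deriv ψ) t ∧ DifferentiableAt ℝ (deriv (deriv ψ)) t)
    (hpos : ∀ t ∈ Ioo σ₁ σ₂, 0 < deriv ψ t)
    (hu : ∀ t ∈ Ioo σ₁ σ₂,
      deriv (deriv (fun s => Real.cos (ψ s) / Real.sqrt (deriv ψ s))) t
        + q t * (Real.cos (ψ t) / Real.sqrt (deriv ψ t)) = 0)
    (hv : ∀ t ∈ Ioo σ₁ σ₂,
      deriv (deriv (fun s => Real.sin (ψ s) / Real.sqrt (deriv ψ s))) t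
        + q t * (Real.sin (ψ t) / Real.sqrt (deriv ψ t)) = 0) :
    ∀ t ∈ Ioo σ₁ σ₂,
      q t - (deriv ψ t) ^ 2 - (1 / 2) * (deriv (deriv (deriv ψ)) t / deriv ψ t)
        + (3 / 4) * (deriv (deriv ψ) t / deriv ψ t) ^ 2 = 0 := by
  intro t ht
  have hnear : ∀ᶠ s in 𝓝 t, s ∈ Ioo σ₁ σ₂ := isOpen_Ioo.mem_nhds ht
  have hamp := hasDerivAt_deriv_inv_sqrt
    (hnear.mono fun s hs => ⟨(hdiff s hs).2.1, hpos s hs⟩) (hdiff t ht).2.2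
  have hcomb := cos_mul_deriv_deriv_mul_cos_add_sin_mul_deriv_deriv_mul_sin
    (hnear.mono fun s hs => ((hdiff s hs).2.1.hasDerivAt.inv_sqrt (hpos s hs)).differentiableAt)
    (hnear.mono fun s hs => (hdiff s hs).1) hamp.differentiableAt (hdiff t ht).2.1
  simp only [← div_eq_inv_mul, hamp.deriv] at hcomb
  have hkey : (√(deriv ψ t))⁻¹ * (q t - deriv ψ t ^ 2 - 1 / 2 * (deriv (deriv (deriv ψ)) t
      / deriv ψ t) + 3 / 4 * (deriv (deriv ψ) t / deriv ψ t) ^ 2) = 0 := by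
    linear_combination cos (ψ t) * hu t ht + sin (ψ t) * hv t ht - hcomb
      - q t * (√(deriv ψ t))⁻¹ * sin_sq_add_cos_sq (ψ t)
  exact (mul_eq_zero.1 hkey).resolve_left (inv_ne_zero (sqrt_pos.2 (hpos t ht)).ne')
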